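/- arXiv:2410.12201 — 4 statements merged into one kernel-verified Lean document; each statement's English description precedes it below -/
import Mathlib

section
/- Let Y be a random variable in a space 𝒴, C a random set with P(Y ∉ C) ≤ α for fixed α ∈ (0,1). Define a synthetic p-value p(Y) which, conditionally on the event {Y ∉ C}, is uniform on (0,α), and conditionally on {Y ∈ C}, is uniform on (α,1). Then for all t ∈ [0,1], P(p(Y) ≤ t) = t + Δ(t), where Δ(t) = (1 − P(Y ∉ C)/α)·((t−α)·1{t>α} − t(1−α))/(1−α) ≤ 0. In particular P(p(Y) ≤ t) ≤ t. -/
open MeasureTheory Set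

/-- Synthetic p-value: exact CDF and super-uniformity.
`A = {Y ∉ C}` is the miscoverage event; conditionally on `A`, `p` is Unif(0,α);
conditionally on `Aᶜ`, `p` is Unif(α,1). -/
theorem stmt_0 {Ω 𝒴 : Type*} [MeasurableSpace Ω] (ℙ : Measure Ω) [IsProbabilityMeasure ℙ]
    (α : ℝ) (hα : α ∈ Set.Ioo (0 : ℝ) 1)
    (Y : Ω → 𝒴) (C : Ω → Set 𝒴)
    (hAmeas : MeasurableSet {ω | Y ω ∉ C ω})
    (hA : ℙ {ω | Y ω ∉ C ω} ≤ ENNReal.ofReal α)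
    (p : Ω → ℝ) (hp : Measurable p)
    (hunif1 : ∀ t : ℝ,
      ℙ ({ω | p ω ≤ t} ∩ {ω | Y ω ∉ C ω})
        = ℙ {ω | Y ω ∉ C ω} * ENNReal.ofReal (min 1 (max 0 (t / α))))
    (hunif2 : ∀ t : ℝ,
      ℙ ({ω | p ω ≤ t} ∩ {ω | Y ω ∉ C ω}ᶜ)
        = ℙ {ω | Y ω ∉ C ω}ᶜ * ENNReal.ofReal (min 1 (max 0 ((t - α) / (1 - α))))) :
    ∀ t ∈ Set.Icc (0 : ℝ) 1,
      (ℙ {ω | p ω ≤ t}).toReal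
          = t + (1 - (ℙ {ω | Y ω ∉ C ω}).toReal / α) *
              ((t - α) * (if α < t then (1 : ℝ) else 0) - t * (1 - α)) / (1 - α)
      ∧ (1 - (ℙ {ω | Y ω ∉ C ω}).toReal / α) *
              ((t - α) * (if α < t then (1 : ℝ) else 0) - t * (1 - α)) / (1 - α) ≤ 0
      ∧ ℙ {ω | p ω ≤ t} ≤ ENNReal.ofReal t := by

  obtain ⟨hα0, hα1⟩ := hα
  rintro t ⟨ht0, ht1⟩
  set A := {ω | Y ω ∉ C ω} with hAdef
  have hfinA : ℙ A ≠ ⊤ := measure_ne_top ℙ A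
  set a := (ℙ A).toReal with ha
  have ha0 : 0 ≤ a := ENNReal.toReal_nonneg
  have haα : a ≤ α := by
    have := ENNReal.toReal_mono (by simp) hA
    simpa [ENNReal.toReal_ofReal hα0.le] using this
  have hAc : (ℙ Aᶜ).toReal = 1 - a := by
    rw [prob_compl_eq_one_sub hAmeas,
      ENNReal.toReal_sub_of_le prob_le_one ENNReal.one_ne_top]
    simp [ha]
  have hsplit : ℙ {ω | p ω ≤ t} = ℙ ({ω | p ω ≤ t} ∩ A) + ℙ ({ω | p ω ≤ t} ∩ Aᶜ) := by
    rw [← Set.diff_eq, measure_inter_add_diff _ hAmeas]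
  have hkey : (ℙ {ω | p ω ≤ t}).toReal
      = a * min 1 (max 0 (t / α)) + (1 - a) * min 1 (max 0 ((t - α) / (1 - α))) := by
    rw [hsplit, ENNReal.toReal_add (measure_ne_top _ _) (measure_ne_top _ _), hunif1 t, hunif2 t,
      ENNReal.toReal_mul, ENNReal.toReal_mul, hAc,
      ENNReal.toReal_ofReal (le_min zero_le_one (le_max_left 0 _)),
      ENNReal.toReal_ofReal (le_min zero_le_one (le_max_left 0 _))]
  have haα' : a / α ≤ 1 := (div_le_one hα0).mpr haα
  have hΔ : (1 - a / α) *
      ((t - α) * (if α < t then (1 : ℝ) else 0) - t * (1 - α)) / (1 - α) ≤ 0 := by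
    apply div_nonpos_of_nonpos_of_nonneg _ (by linarith)
    refine mul_nonpos_of_nonneg_of_nonpos (by linarith) ?_
    by_cases hc : α < t
    · rw [if_pos hc]; nlinarith
    · rw [if_neg hc]; nlinarith
  have heq : (ℙ {ω | p ω ≤ t}).toReal
      = t + (1 - a / α) *
          ((t - α) * (if α < t then (1 : ℝ) else 0) - t * (1 - α)) / (1 - α) := by
    rw [hkey]
    by_cases hc : α < t
    · rw [if_pos hc,
        min_eq_left (le_max_of_le_right ((one_le_div hα0).mpr hc.le)),
        max_eq_right (div_nonneg (by linarith) (by linarith)),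
        min_eq_right ((div_le_one (by linarith : (0:ℝ) < 1 - α)).mpr (by linarith))]
      have h1α : (1:ℝ) - α ≠ 0 := by linarith
      field_simp
      ring
    · push_neg at hc
      rw [if_neg (not_lt.mpr hc),
        max_eq_right (div_nonneg ht0 hα0.le),
        min_eq_right ((div_le_one hα0).mpr hc),
        max_eq_left (div_nonpos_of_nonpos_of_nonneg (by linarith) (by linarith)),
        min_eq_right (le_refl (0:ℝ) |>.trans zero_le_one |> fun _ => (zero_le_one : (0:ℝ) ≤ 1))]
      have h1α : (1:ℝ) - α ≠ 0 := by linarith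
      field_simp
      ring
  refine ⟨heq, hΔ, ?_⟩
  have hle : (ℙ {ω | p ω ≤ t}).toReal ≤ t := by rw [heq]; linarith
  calc ℙ {ω | p ω ≤ t} = ENNReal.ofReal ((ℙ {ω | p ω ≤ t}).toReal) :=
        (ENNReal.ofReal_toReal (measure_ne_top _ _)).symm
    _ ≤ ENNReal.ofReal t := ENNReal.ofReal_le_ofReal hle
end

section
/- Let f : [0,∞) → [0,∞] be a decreasing function with ∫₀¹ f(x) dx ≤ 1, and let p be a random variable with P(p ≤ t) ≤ t for all t ∈ [0,1]. Then for any α ∈ (0,1), E[f(p/α)] ≤ 1/α. -/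
/-!
The event `{a < g p}` for a decreasing `g` is `{p ∈ S}` with `S ⊆ [0,1]` an initial segment, and
super-uniformity of `p` says exactly that such events are no more likely under `p` than under the
uniform law; by the layer-cake formula, `E[g p] ≤ ∫₀¹ g`. Since `α ≤ 1`, `f (p / α) ≤ f p`, so
`E[f (p / α)] ≤ ∫₀¹ f ≤ 1 ≤ 1 / α`.
-/

open MeasureTheory Set ENNReal

lemma volume_setOf_ofReal_lt_inter_Ioi (a : ℝ≥0∞) :
    volume ({t : ℝ | ENNReal.ofReal t < a} ∩ Ioi 0) = a := by
  rcases eq_or_ne a ⊤ with rfl | ha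
  · simp [ENNReal.ofReal_lt_top, Real.volume_Ioi]
  · have hIoo : {t : ℝ | ENNReal.ofReal t < a} ∩ Ioi 0 = Ioo 0 a.toReal := by
      ext t
      simp only [mem_inter_iff, mem_ofPred_eq, mem_Ioi, mem_Ioo]
      exact ⟨fun ⟨hlt, hpos⟩ => ⟨hpos, (ENNReal.ofReal_lt_iff_lt_toReal hpos.le ha).mp hlt⟩,
        fun ⟨hpos, hlt⟩ => ⟨(ENNReal.ofReal_lt_iff_lt_toReal hpos.le ha).mpr hlt, hpos⟩⟩
    rw [hIoo, Real.volume_Ioo, sub_zero, ENNReal.ofReal_toReal ha]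

lemma lintegral_eq_lintegral_meas_ofReal_lt {β : Type*} [MeasurableSpace β] (ν : Measure β)
    [SFinite ν] {h : β → ℝ≥0∞} (hh : Measurable h) :
    ∫⁻ x, h x ∂ν = ∫⁻ t in Ioi 0, ν {x | ENNReal.ofReal t < h x} := by
  have hE : MeasurableSet {z : β × ℝ | ENNReal.ofReal z.2 < h z.1} :=
    measurableSet_lt (ENNReal.measurable_ofReal.comp measurable_snd) (hh.comp measurable_fst)
  calc ∫⁻ x, h x ∂ν
      = ∫⁻ x, volume.restrict (Ioi 0) {t : ℝ | ENNReal.ofReal t < h x} ∂ν := by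
        simp_rw [Measure.restrict_apply' measurableSet_Ioi, volume_setOf_ofReal_lt_inter_Ioi]
    _ = ν.prod (volume.restrict (Ioi 0)) {z | ENNReal.ofReal z.2 < h z.1} :=
        (Measure.prod_apply hE).symm
    _ = ∫⁻ t in Ioi 0, ν {x | ENNReal.ofReal t < h x} := Measure.prod_apply_symm hE

lemma measure_preimage_le_volume_of_superUniform {Ω : Type*} [MeasurableSpace Ω]
    {μ : Measure Ω} {p : Ω → ℝ}
    (hsup : ∀ t ∈ Icc (0 : ℝ) 1, μ {ω | p ω ≤ t} ≤ ENNReal.ofReal t)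
    {S : Set ℝ} (hS01 : S ⊆ Icc 0 1) (hS : ∀ x ∈ S, Icc 0 x ⊆ S) :
    μ (p ⁻¹' S) ≤ volume S := by
  rcases S.eq_empty_or_nonempty with rfl | hne
  · simp
  have hbdd : BddAbove S := bddAbove_Icc.mono hS01
  obtain ⟨x₀, hx₀⟩ := hne
  set s := sSup S
  have hs0 : 0 ≤ s := (hS01 hx₀).1.trans (le_csSup hbdd hx₀)
  have hs1 : s ≤ 1 := csSup_le ⟨x₀, hx₀⟩ fun x hx => (hS01 hx).2
  have hIco : Ico 0 s ⊆ S := fun y ⟨hy0, hys⟩ => by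
    obtain ⟨x, hxS, hyx⟩ := exists_lt_of_lt_csSup ⟨x₀, hx₀⟩ hys
    exact hS x hxS ⟨hy0, hyx.le⟩
  calc μ (p ⁻¹' S) ≤ μ {ω | p ω ≤ s} := measure_mono fun ω hω => le_csSup hbdd hω
    _ ≤ ENNReal.ofReal s := hsup s ⟨hs0, hs1⟩
    _ = volume (Ico 0 s) := by rw [Real.volume_Ico, sub_zero]
    _ ≤ volume S := measure_mono hIco

lemma lintegral_comp_le_setLIntegral_Icc_of_superUniform {Ω : Type*} [MeasurableSpace Ω]
    (μ : Measure Ω) [SFinite μ] {g : ℝ → ℝ≥0∞} (hg : AntitoneOn g (Ici 0))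
    (hgmeas : Measurable g) {p : Ω → ℝ} (hp : Measurable p)
    (hprange : ∀ ω, p ω ∈ Icc (0 : ℝ) 1)
    (hsup : ∀ t ∈ Icc (0 : ℝ) 1, μ {ω | p ω ≤ t} ≤ ENNReal.ofReal t) :
    ∫⁻ ω, g (p ω) ∂μ ≤ ∫⁻ x in Icc 0 1, g x := by
  rw [lintegral_eq_lintegral_meas_ofReal_lt μ (h := fun ω => g (p ω)) (hgmeas.comp hp),
    lintegral_eq_lintegral_meas_ofReal_lt _ hgmeas]
  refine lintegral_mono fun t => ?_
  rw [Measure.restrict_apply (measurableSet_lt measurable_const hgmeas)]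
  have hpre : {ω | ENNReal.ofReal t < g (p ω)}
      = p ⁻¹' ({x | ENNReal.ofReal t < g x} ∩ Icc 0 1) :=
    ext fun ω => (and_iff_left (hprange ω)).symm
  rw [hpre]
  refine measure_preimage_le_volume_of_superUniform hsup inter_subset_right ?_
  rintro x ⟨hgx, hx0, hx1⟩ y ⟨hy0, hyx⟩
  exact ⟨hgx.trans_le (hg hy0 hx0 hyx), hy0, hyx.trans hx1⟩

/-- Calibration lemma: a p-to-e calibrator `f` (decreasing, `∫₀¹ f ≤ 1`) applied to a
rescaled super-uniform p-value satisfies `E[f(p/α)] ≤ 1/α`. -/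
theorem stmt_9 {Ω : Type*} [MeasurableSpace Ω] (μ : Measure Ω) [IsProbabilityMeasure μ]
    (f : ℝ → ℝ≥0∞) (hf : AntitoneOn f (Set.Ici 0)) (hfmeas : Measurable f)
    (hfint : ∫⁻ x in Set.Icc (0 : ℝ) 1, f x ≤ 1)
    (p : Ω → ℝ) (hp : Measurable p) (hprange : ∀ ω, p ω ∈ Set.Icc (0 : ℝ) 1)
    (hsup : ∀ t ∈ Set.Icc (0 : ℝ) 1, μ {ω | p ω ≤ t} ≤ ENNReal.ofReal t)
    (α : ℝ) (hα : α ∈ Set.Ioo (0 : ℝ) 1) :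
    ∫⁻ ω, f (p ω / α) ∂μ ≤ ENNReal.ofReal (1 / α) := by
  obtain ⟨hα0, hα1⟩ := hα
  have hrescale : ∀ ω, f (p ω / α) ≤ f (p ω) := fun ω =>
    have hp0 := (hprange ω).1
    have hle : p ω ≤ p ω / α := le_div_self hp0 hα0 hα1.le
    hf hp0 (hp0.trans hle) hle
  calc ∫⁻ ω, f (p ω / α) ∂μ ≤ ∫⁻ ω, f (p ω) ∂μ := lintegral_mono hrescale
    _ ≤ ∫⁻ x in Icc 0 1, f x :=
        lintegral_comp_le_setLIntegral_Icc_of_superUniform μ hf hfmeas hp hprange hsup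
    _ ≤ 1 := hfint
    _ ≤ ENNReal.ofReal (1 / α) := by
        rw [ENNReal.one_le_ofReal, le_div_iff₀ hα0, one_mul]
        exact hα1.le
end

section
/- Let α_ℓ = α for all ℓ and suppose C_{1,α},…,C_{L,α} are i.i.d. random sets each satisfying P(Y ∉ C_{ℓ,α}) ≤ α. Fix y with P(y ∉ C_{1,α}) > α·(τ/α')^{1/k} for fixed k ∈ ℕ, τ ∈ (0,1], α' ∈ (0,1). Define e_ℓ(y) = α⁻¹·1{y ∉ C_{ℓ,α}} and ē_k(y) = (L choose k)⁻¹·∑_{|I|=k} ∏_{ℓ∈I} e_ℓ(y). Then P(ē_k(y) ≥ τ/α') = 1 − O(exp(−C·L)) as L → ∞ for some constant C > 0. -/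
open MeasureTheory ProbabilityTheory Set
open scoped Classical

/-!
Let `S` be the number of the first `L` sets that miss `y`. Expanding the product shows
`ē_k(y) = α⁻ᵏ · C(S, k) / C(L, k)`, and `C(S, k) / C(L, k) ≥ ((S + 1 - k) / L) ^ k`. Put
`p = P(y ∉ C₀)`, `q = α (τ/α')^{1/k} < p` and `δ = (p - q) / 2`. Once `L ≥ k / δ`, the event
`S > (q + δ) L` gives `S + 1 - k ≥ q L`, hence `ē_k(y) ≥ α⁻ᵏ qᵏ = τ/α'`. `S` is a sum of `L`
independent Bernoulli(`p`) variables, so Hoeffding's inequality bounds the probability of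
`S ≤ (q + δ) L = (p - δ) L` by `exp (-2 δ² L)`; the finitely many `L < k / δ` only affect
the constant.
-/

theorem Finset.sum_powersetCard_prod_mul_ite {ι R : Type*} [CommSemiring R] (s : Finset ι)
    (P : ι → Prop) [DecidablePred P] (a : R) (k : ℕ) :
    ∑ I ∈ s.powersetCard k, ∏ ℓ ∈ I, (a * if P ℓ then 1 else 0)
      = a ^ k * ((s.filter P).card.choose k : R) := by
  have hsubset : (s.powersetCard k).filter (fun I => ∀ ℓ ∈ I, P ℓ)
      = (s.filter P).powersetCard k := by
    ext I
    simp only [Finset.mem_filter, Finset.mem_powersetCard, Finset.subset_iff]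
    grind
  calc ∑ I ∈ s.powersetCard k, ∏ ℓ ∈ I, (a * if P ℓ then 1 else 0)
      = ∑ I ∈ s.powersetCard k, a ^ k * if ∀ ℓ ∈ I, P ℓ then 1 else 0 := by
        refine Finset.sum_congr rfl fun I hI => ?_
        rw [Finset.prod_mul_distrib, Finset.prod_const, Finset.prod_boole,
          (Finset.mem_powersetCard.mp hI).2]
    _ = a ^ k * ((s.filter P).card.choose k : R) := by
        rw [← Finset.mul_sum, Finset.sum_boole, hsubset, Finset.card_powersetCard]

theorem Nat.pow_le_choose_div_choose {x : ℝ} (hx : 0 ≤ x) {m n k : ℕ} (hkn : k ≤ n)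
    (h : x * n + k ≤ m + 1) : x ^ k ≤ m.choose k / n.choose k := by
  have hkm : k ≤ m + 1 := by
    exact_mod_cast (le_add_of_nonneg_left (mul_nonneg hx n.cast_nonneg)).trans h
  rw [le_div_iff₀ (by exact_mod_cast Nat.choose_pos hkn), ← mul_le_mul_iff_of_pos_right
    (show (0 : ℝ) < k.factorial by exact_mod_cast k.factorial_pos)]
  calc x ^ k * n.choose k * k.factorial = x ^ k * (n.descFactorial k : ℝ) := by
        rw [Nat.descFactorial_eq_factorial_mul_choose]; push_cast; ring
    _ ≤ x ^ k * (n : ℝ) ^ k := by gcongr; exact_mod_cast n.descFactorial_le_pow k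
    _ = (x * n) ^ k := (mul_pow _ _ _).symm
    _ ≤ ((m + 1 - k : ℕ) : ℝ) ^ k := by
        gcongr
        rw [Nat.cast_sub hkm]; push_cast; linarith
    _ ≤ m.descFactorial k := by exact_mod_cast m.pow_sub_le_descFactorial k
    _ = m.choose k * k.factorial := by
        rw [Nat.descFactorial_eq_factorial_mul_choose]; push_cast; ring

theorem Finset.pow_mul_pow_le_inv_choose_mul_sum_powersetCard {ι : Type*} (s : Finset ι)
    (P : ι → Prop) [DecidablePred P] {a x δ : ℝ} (ha : 0 ≤ a) (hx : 0 ≤ x) {k : ℕ}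
    (hk : k ≤ δ * s.card) (hP : (x + δ) * s.card < (s.filter P).card) :
    a ^ k * x ^ k
      ≤ (s.card.choose k : ℝ)⁻¹ * ∑ I ∈ s.powersetCard k, ∏ ℓ ∈ I, (a * if P ℓ then 1 else 0) := by
  have hPs : ((s.filter P).card : ℝ) ≤ s.card := by exact_mod_cast Finset.card_filter_le s P
  have hxs : 0 ≤ x * s.card := by positivity
  have hks : k ≤ s.card := by exact_mod_cast (show (k : ℝ) ≤ s.card by linarith)
  rw [Finset.sum_powersetCard_prod_mul_ite, mul_left_comm, ← div_eq_inv_mul]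
  exact mul_le_mul_of_nonneg_left (Nat.pow_le_choose_div_choose hx hks (by linarith))
    (pow_nonneg ha k)

theorem ProbabilityTheory.measureReal_card_filter_mem_range_le_le_exp {Ω : Type*}
    [MeasurableSpace Ω] {μ : Measure Ω} [IsProbabilityMeasure μ] {A : ℕ → Set Ω}
    (hA : ∀ ℓ, MeasurableSet (A ℓ)) (hindep : iIndepSet A μ) {p r : ℝ}
    (hp : ∀ ℓ, μ.real (A ℓ) = p) (hrp : r ≤ p) (L : ℕ) :
    μ.real {ω | ((Finset.range L).filter (fun ℓ => ω ∈ A ℓ)).card ≤ r * L}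
      ≤ Real.exp (-(2 * (p - r) ^ 2 * L)) := by
  set X : ℕ → Ω → ℝ := fun ℓ ω => p - (A ℓ).indicator 1 ω
  have hX_indep : iIndepFun X μ :=
    hindep.iIndepFun_indicator.comp (fun _ t => p - t) fun _ => by fun_prop
  have hX_subG : ∀ ℓ < L, HasSubgaussianMGF (X ℓ) ((‖p - (p - 1)‖₊ / 2) ^ 2) μ := by
    intro ℓ _
    refine hasSubgaussianMGF_of_mem_Icc_of_integral_eq_zero ?_ ?_ ?_
    · exact (measurable_const.sub (measurable_const.indicator (hA ℓ))).aemeasurable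
    · refine ae_of_all _ fun ω => ?_
      simp only [X, Set.indicator_apply, Pi.one_apply]
      split_ifs <;> constructor <;> linarith
    · rw [integral_sub (integrable_const _) ((integrable_const 1).indicator (hA ℓ)),
        integral_indicator_one (hA ℓ), hp]
      simp
  have hsum : ∀ ω, ∑ ℓ ∈ Finset.range L, X ℓ ω
      = p * L - ((Finset.range L).filter (fun ℓ => ω ∈ A ℓ)).card := by
    intro ω
    simp only [X, Finset.sum_sub_distrib, Finset.sum_const, Finset.card_range, nsmul_eq_mul,
      Set.indicator_apply, Pi.one_apply, Finset.sum_boole]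
    ring
  calc μ.real {ω | ((Finset.range L).filter (fun ℓ => ω ∈ A ℓ)).card ≤ r * L}
      = μ.real {ω | (p - r) * L ≤ ∑ ℓ ∈ Finset.range L, X ℓ ω} := by
        congr 1; ext ω; simp only [Set.mem_ofPred_eq, hsum]; constructor <;> intro <;> linarith
    _ ≤ Real.exp (-((p - r) * L) ^ 2 / (2 * L * ((‖p - (p - 1)‖₊ / 2) ^ 2 : NNReal))) :=
        HasSubgaussianMGF.measure_sum_range_ge_le_of_iIndepFun hX_indep hX_subG
          (mul_nonneg (sub_nonneg.mpr hrp) L.cast_nonneg)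
    _ = Real.exp (-(2 * (p - r) ^ 2 * L)) := by
        rcases L.eq_zero_or_pos with rfl | hL
        · simp
        · congr 1
          simp only [sub_sub_cancel, nnnorm_one, one_div, inv_pow, NNReal.coe_inv, NNReal.coe_pow,
            NNReal.coe_ofNat]
          field_simp

theorem MeasureTheory.one_sub_measureReal_le_of_compl_subset {Ω : Type*} [MeasurableSpace Ω]
    {μ : Measure Ω} [IsProbabilityMeasure μ] {E F : Set Ω} (h : Fᶜ ⊆ E) :
    1 - μ.real E ≤ μ.real F := by
  have hcover : μ.real Set.univ ≤ μ.real (E ∪ F) :=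
    measureReal_mono fun ω _ => (em (ω ∈ F)).elim Or.inr fun hω => Or.inl (h hω)
  rw [probReal_univ] at hcover
  linarith [measureReal_union_le (μ := μ) E F]

theorem exists_forall_le_mul_exp_neg {f : ℕ → ℝ} {c x₀ : ℝ} (hc : 0 ≤ c) (hx₀ : 0 ≤ x₀)
    (hf_le_one : ∀ n, f n ≤ 1) (hf : ∀ n : ℕ, x₀ ≤ n → f n ≤ Real.exp (-(c * n))) :
    ∃ K, ∀ n, f n ≤ K * Real.exp (-(c * n)) := by
  refine ⟨Real.exp (c * x₀), fun n => ?_⟩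
  rcases le_or_gt x₀ n with hn | hn
  · exact (hf n hn).trans (le_mul_of_one_le_left (Real.exp_pos _).le
      (Real.one_le_exp (mul_nonneg hc hx₀)))
  · rw [← Real.exp_add]
    exact (hf_le_one n).trans (Real.one_le_exp (by nlinarith))

theorem stmt_10_general {Ω 𝒴 : Type*} [MeasurableSpace Ω] (μ : Measure Ω) [IsProbabilityMeasure μ]
    (α α' τ : ℝ) (hα : α ∈ Set.Ioo (0 : ℝ) 1) (hα' : α' ∈ Set.Ioo (0 : ℝ) 1)
    (hτ : τ ∈ Set.Ioc (0 : ℝ) 1) (k : ℕ) (hk : 1 ≤ k)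
    (C : ℕ → Ω → Set 𝒴) (y : 𝒴)
    (hmeas : ∀ ℓ : ℕ, MeasurableSet {ω | y ∉ C ℓ ω})
    (hindep : iIndepSet (fun ℓ : ℕ => {ω | y ∉ C ℓ ω}) μ)
    (hident : ∀ ℓ : ℕ, μ {ω | y ∉ C ℓ ω} = μ {ω | y ∉ C 0 ω})
    (hq : α * (τ / α') ^ ((k : ℝ))⁻¹ < (μ {ω | y ∉ C 0 ω}).toReal) :
    ∃ c > (0 : ℝ), ∃ K : ℝ, ∀ L : ℕ,
      1 - (μ {ω | τ / α' ≤ ((L.choose k : ℝ))⁻¹ *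
            ∑ I ∈ Finset.powersetCard k (Finset.range L),
              ∏ ℓ ∈ I, (α⁻¹ * if y ∉ C ℓ ω then (1 : ℝ) else 0)}).toReal
        ≤ K * Real.exp (-(c * L)) := by
  set p := μ.real {ω | y ∉ C 0 ω}
  set q := α * (τ / α') ^ ((k : ℝ))⁻¹
  have hτα' : 0 < τ / α' := div_pos hτ.1 hα'.1
  have hq_nonneg : 0 ≤ q := mul_nonneg hα.1.le (Real.rpow_nonneg hτα'.le _)
  have hq_pow : α⁻¹ ^ k * q ^ k = τ / α' := by
    rw [mul_pow, ← Real.rpow_natCast ((τ / α') ^ _), ← Real.rpow_mul hτα'.le,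
      inv_mul_cancel₀ (Nat.cast_ne_zero.mpr (Nat.one_le_iff_ne_zero.mp hk)), Real.rpow_one,
      ← mul_assoc, ← mul_pow, inv_mul_cancel₀ hα.1.ne', one_pow, one_mul]
  set δ := (p - q) / 2
  have hδ : 0 < δ := by simp only [δ]; linarith [show q < p from hq]
  refine ⟨2 * δ ^ 2, by positivity, exists_forall_le_mul_exp_neg (x₀ := k / δ) (by positivity)
    (by positivity) (fun L => by simp) fun L hL => ?_⟩
  set S : Ω → ℕ := fun ω => ((Finset.range L).filter (fun ℓ => y ∉ C ℓ ω)).card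
  have hpδ : p - (q + δ) = δ := by simp only [δ]; ring
  calc _ ≤ μ.real {ω | (S ω : ℝ) ≤ (q + δ) * L} := by
        refine one_sub_measureReal_le_of_compl_subset fun ω hω => ?_
        have h := Finset.pow_mul_pow_le_inv_choose_mul_sum_powersetCard (Finset.range L)
          (fun ℓ => y ∉ C ℓ ω) (δ := δ) (k := k) (inv_nonneg.mpr hα.1.le) hq_nonneg
          (by rw [Finset.card_range, mul_comm]; exact (div_le_iff₀ hδ).mp hL)
          (by rw [Finset.card_range]; exact not_le.mp hω)
        rwa [hq_pow, Finset.card_range] at h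
    _ ≤ Real.exp (-(2 * (p - (q + δ)) ^ 2 * L)) := by
        -- `convert` only has to match the classical decidability instances of the two filters
        convert measureReal_card_filter_mem_range_le_le_exp (p := p) (r := q + δ) hmeas hindep
          (fun ℓ => congrArg ENNReal.toReal (hident ℓ)) (by linarith) L
    _ = Real.exp (-(2 * δ ^ 2 * L)) := by rw [hpδ]

/-- Asymptotic size of the e-value merged set: for a fixed candidate `y` with
miscoverage probability `P(y ∉ C₁) > α (τ/α')^{1/k}`, the probability that the
merged e-value `ē_k` (built from the first `L` i.i.d. sets) rejects `y`
is `1 - O(exp(-c L))`. -/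
theorem stmt_10 {Ω 𝒴 : Type*} [MeasurableSpace Ω] (μ : Measure Ω) [IsProbabilityMeasure μ]
    (α α' τ : ℝ) (hα : α ∈ Set.Ioo (0 : ℝ) 1) (hα' : α' ∈ Set.Ioo (0 : ℝ) 1)
    (hτ : τ ∈ Set.Ioc (0 : ℝ) 1) (k : ℕ) (hk : 1 ≤ k)
    (Y : Ω → 𝒴) (C : ℕ → Ω → Set 𝒴) (y : 𝒴)
    (hcov : ∀ ℓ : ℕ, μ {ω | Y ω ∉ C ℓ ω} ≤ ENNReal.ofReal α)
    (hmeas : ∀ ℓ : ℕ, MeasurableSet {ω | y ∉ C ℓ ω})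
    (hindep : iIndepSet (fun ℓ : ℕ => {ω | y ∉ C ℓ ω}) μ)
    (hident : ∀ ℓ : ℕ, μ {ω | y ∉ C ℓ ω} = μ {ω | y ∉ C 0 ω})
    (hq : α * (τ / α') ^ ((k : ℝ))⁻¹ < (μ {ω | y ∉ C 0 ω}).toReal) :
    ∃ c > (0 : ℝ), ∃ K : ℝ, ∀ L : ℕ,
      1 - (μ {ω | τ / α' ≤ ((L.choose k : ℝ))⁻¹ *
            ∑ I ∈ Finset.powersetCard k (Finset.range L),
              ∏ ℓ ∈ I, (α⁻¹ * if y ∉ C ℓ ω then (1 : ℝ) else 0)}).toReal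
        ≤ K * Real.exp (-(c * L)) :=
  stmt_10_general μ α α' τ hα hα' hτ k hk C y hmeas hindep hident hq
end

section
/- Let C be a random set and θ* a fixed parameter, ℒ : 2^Θ × Θ → [0,B] a loss with ℒ(C,θ) = 0 whenever θ ∈ C, and E[ℒ(C,θ*)] ≤ β for β ∈ (0,B). Fix τ ∈ (β, B) and define the synthetic p-value p(θ) to be uniform on (0, β/τ) if ℒ(C,θ) ≥ τ and uniform on (β/τ, 1) otherwise, independent of C. Then P(p(θ*) ≤ t) ≤ t for all t ∈ [0,1]. -/
/-!
By Markov's inequality the risk bound `E[ℒ(C, θ*)] ≤ β` gives `P(ℒ(C, θ*) ≥ τ) ≤ β / τ`.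
Hence the law of `p(θ*)` is a mixture `m · Unif(0, a) + (1 - m) · Unif(a, 1)` with `a = β / τ`
and weight `m ≤ a`. Such a mixture is super-uniform: for `t ≤ a` its CDF is `m t / a ≤ t`, and
for `t > a` it is at most `m + (1 - m) s ≤ a + (1 - a) s = t`, where `s = (t - a) / (1 - a) ≤ 1`.
-/

open MeasureTheory Set

theorem two_piece_uniform_mixture_cdf_le {a m t : ℝ} (ha : 0 < a) (ha1 : a < 1)
    (hm : 0 ≤ m) (hma : m ≤ a) (ht0 : 0 ≤ t) (ht1 : t ≤ 1) :
    m * min 1 (max 0 (t / a)) + (1 - m) * min 1 (max 0 ((t - a) / (1 - a))) ≤ t := by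
  have h1a : 0 < 1 - a := by linarith
  set x := min 1 (max 0 (t / a))
  have hx0 : 0 ≤ x := le_min zero_le_one (le_max_left _ _)
  rcases le_or_gt t a with hta | hat
  · have hs : (t - a) / (1 - a) ≤ 0 := div_nonpos_of_nonpos_of_nonneg (by linarith) h1a.le
    have hx : x ≤ t / a := min_le_of_right_le (max_le (by positivity) le_rfl)
    rw [max_eq_left hs, min_eq_right zero_le_one, mul_zero, add_zero]
    calc m * x ≤ a * (t / a) := mul_le_mul hma hx hx0 ha.le
      _ = t := mul_div_cancel₀ t ha.ne'
  · set s := (t - a) / (1 - a) with hs_def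
    have hs0 : 0 ≤ s := div_nonneg (by linarith) h1a.le
    have hs1 : s ≤ 1 := (div_le_one h1a).2 (by linarith)
    have hts : a + (1 - a) * s = t := by rw [hs_def]; field_simp; ring
    rw [max_eq_right hs0, min_eq_right hs1]
    calc m * x + (1 - m) * s ≤ m + (1 - m) * s := by
          gcongr; exact mul_le_of_le_one_right hm (min_le_left _ _)
      _ ≤ a + (1 - a) * s := by nlinarith [mul_nonneg (sub_nonneg.2 hma) (sub_nonneg.2 hs1)]
      _ = t := hts

theorem measureReal_le_div_of_integral_le {α : Type*} [MeasurableSpace α] {μ : Measure α}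
    {f : α → ℝ} (hf : 0 ≤ᵐ[μ] f) (hfi : Integrable f μ) {β τ : ℝ} (hτ : 0 < τ)
    (h : ∫ x, f x ∂μ ≤ β) : μ.real {x | τ ≤ f x} ≤ β / τ :=
  (le_div_iff₀' hτ).2 ((mul_meas_ge_le_integral_of_nonneg hf hfi τ).trans h)

theorem measureReal_eq_mul_of_measure_eq {α : Type*} [MeasurableSpace α] {μ : Measure α}
    {s t : Set α} {x : ℝ} (hx : 0 ≤ x) (h : μ s = μ t * ENNReal.ofReal x) :
    μ.real s = μ.real t * x := by
  rw [measureReal_def, h, ENNReal.toReal_mul, ENNReal.toReal_ofReal hx, measureReal_def]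

theorem stmt_15_general {Ω Θ : Type*} [MeasurableSpace Ω] (μ : Measure Ω) [IsProbabilityMeasure μ]
    (B β τ : ℝ) (hβ : β ∈ Set.Ioo 0 B) (hτ : τ ∈ Set.Ioo β B)
    (C : Ω → Set Θ) (θs : Θ) (Lo : Set Θ → Θ → ℝ)
    (hrange : ∀ s θ, Lo s θ ∈ Set.Icc 0 B)
    (hint : Integrable (fun ω => Lo (C ω) θs) μ)
    (hrisk : ∫ ω, Lo (C ω) θs ∂μ ≤ β)
    (p : Ω → ℝ)
    (hunif1 : ∀ t : ℝ,
      μ ({ω | p ω ≤ t} ∩ {ω | τ ≤ Lo (C ω) θs})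
        = μ {ω | τ ≤ Lo (C ω) θs} * ENNReal.ofReal (min 1 (max 0 (t / (β / τ)))))
    (hunif2 : ∀ t : ℝ,
      μ ({ω | p ω ≤ t} ∩ {ω | τ ≤ Lo (C ω) θs}ᶜ)
        = μ ({ω | τ ≤ Lo (C ω) θs}ᶜ)
            * ENNReal.ofReal (min 1 (max 0 ((t - β / τ) / (1 - β / τ))))) :
    ∀ t ∈ Set.Icc (0 : ℝ) 1, μ {ω | p ω ≤ t} ≤ ENNReal.ofReal t := by
  intro t ht
  have hτ0 : 0 < τ := hβ.1.trans hτ.1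
  set A := {ω | τ ≤ Lo (C ω) θs}
  have hA : NullMeasurableSet A μ := hint.aemeasurable.nullMeasurable measurableSet_Ici
  have hmarkov : μ.real A ≤ β / τ :=
    measureReal_le_div_of_integral_le (ae_of_all _ fun ω => (hrange (C ω) θs).1) hint hτ0 hrisk
  rw [ENNReal.le_ofReal_iff_toReal_le (measure_ne_top _ _) ht.1, ← measureReal_def,
    ← measureReal_inter_add_sdiff₀ hA, sdiff_eq,
    measureReal_eq_mul_of_measure_eq (by positivity) (hunif1 t),
    measureReal_eq_mul_of_measure_eq (by positivity) (hunif2 t), probReal_compl_eq_one_sub₀ hA]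
  exact two_piece_uniform_mixture_cdf_le (div_pos hβ.1 hτ0) ((div_lt_one hτ0).2 hτ.1)
    measureReal_nonneg hmarkov ht.1 ht.2

/-- Synthetic p-value for a risk-controlling set: if `E[ℒ(C,θ*)] ≤ β` and `p`
is Unif(0, β/τ) on `{ℒ(C,θ*) ≥ τ}` and Unif(β/τ, 1) otherwise, then `p` is
super-uniform. -/
theorem stmt_15 {Ω Θ : Type*} [MeasurableSpace Ω] (μ : Measure Ω) [IsProbabilityMeasure μ]
    (B β τ : ℝ) (hB : 0 < B) (hβ : β ∈ Set.Ioo 0 B) (hτ : τ ∈ Set.Ioo β B)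
    (C : Ω → Set Θ) (θs : Θ) (Lo : Set Θ → Θ → ℝ)
    (hrange : ∀ s θ, Lo s θ ∈ Set.Icc 0 B)
    (hzero : ∀ s θ, θ ∈ s → Lo s θ = 0)
    (hint : Integrable (fun ω => Lo (C ω) θs) μ)
    (hrisk : ∫ ω, Lo (C ω) θs ∂μ ≤ β)
    (p : Ω → ℝ) (hp : Measurable p)
    (hunif1 : ∀ t : ℝ,
      μ ({ω | p ω ≤ t} ∩ {ω | τ ≤ Lo (C ω) θs})
        = μ {ω | τ ≤ Lo (C ω) θs} * ENNReal.ofReal (min 1 (max 0 (t / (β / τ)))))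
    (hunif2 : ∀ t : ℝ,
      μ ({ω | p ω ≤ t} ∩ {ω | τ ≤ Lo (C ω) θs}ᶜ)
        = μ ({ω | τ ≤ Lo (C ω) θs}ᶜ)
            * ENNReal.ofReal (min 1 (max 0 ((t - β / τ) / (1 - β / τ))))) :
    ∀ t ∈ Set.Icc (0 : ℝ) 1, μ {ω | p ω ≤ t} ≤ ENNReal.ofReal t :=
  stmt_15_general μ B β τ hβ hτ C θs Lo hrange hint hrisk p hunif1 hunif2
end
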